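/- Let (D, c, f) be an instance of the Maximum Weighted Digraph Partition problem on vertex set V in which every matrix M assigned by f to an arc satisfies M11 + M22 ≥ M12 + M21. Let s and t be two new vertices not in V. Then there exist a symmetric function w* : (V ∪ {s,t}) × (V ∪ {s,t}) → ℝ with w*(u,v) ≥ 0 for all u, v, and a constant C ∈ ℝ, such that for every subset X1 ⊆ V, the total w*-weight of the unordered pairs {u,v} with u ∈ X1 ∪ {s} and v ∈ (V ∖ X1) ∪ {t} equals C − w^P(D), where P = (X1, V ∖ X1). Consequently, the maximum of w^P(D) over all partitions P of V equals C minus the minimum weight of an (s,t)-cut in the weighted undirected graph determined by w*. -/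
import Mathlib


/-- The weight `w^P(uv)` of an arc `uv` (with cost `c uv` and assigned matrix `f uv`)
under the partition `P = (X1, V \ X1)`. -/
def arcWeight {V : Type*} [DecidableEq V] (c : V × V → ℝ)
    (f : V × V → Matrix (Fin 2) (Fin 2) ℝ) (X1 : Finset V) (a : V × V) : ℝ :=
  c a * (if a.1 ∈ X1 then (if a.2 ∈ X1 then f a 0 0 else f a 0 1)
         else (if a.2 ∈ X1 then f a 1 0 else f a 1 1))

/-- The weight `w^P(D)` of the digraph with arc set `A` under the partition
`P = (X1, V \ X1)`. -/
def partWeight {V : Type*} [DecidableEq V] (A : Finset (V × V)) (c : V × V → ℝ)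
    (f : V × V → Matrix (Fin 2) (Fin 2) ℝ) (X1 : Finset V) : ℝ :=
  ∑ a ∈ A, arcWeight c f X1 a

set_option linter.unusedSectionVars false
set_option linter.unusedVariables false

namespace MWDPaux

open Finset

variable {V : Type*} [Fintype V] [DecidableEq V]

noncomputable def lam (c : V × V → ℝ) (f : V × V → Matrix (Fin 2) (Fin 2) ℝ) (a : V × V) : ℝ :=
  (c a * f a 0 0 + c a * f a 1 1 - c a * f a 0 1 - c a * f a 1 0) / 2

noncomputable def pp (c : V × V → ℝ) (f : V × V → Matrix (Fin 2) (Fin 2) ℝ) (a : V × V) : ℝ :=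
  c a * f a 0 0 - c a * f a 1 0 - lam c f a

noncomputable def qq (c : V × V → ℝ) (f : V × V → Matrix (Fin 2) (Fin 2) ℝ) (a : V × V) : ℝ :=
  c a * f a 0 0 - c a * f a 0 1 - lam c f a

noncomputable def Lmb (A : Finset (V × V)) (c : V × V → ℝ)
    (f : V × V → Matrix (Fin 2) (Fin 2) ℝ) (u v : V) : ℝ :=
  if (u, v) ∈ A then lam c f (u, v) else 0

noncomputable def Sf (A : Finset (V × V)) (c : V × V → ℝ)
    (f : V × V → Matrix (Fin 2) (Fin 2) ℝ) (u : V) : ℝ :=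
  ∑ a ∈ A, ((if a.1 = u then |pp c f a| + pp c f a else 0) +
            (if a.2 = u then |qq c f a| + qq c f a else 0))

noncomputable def Tf (A : Finset (V × V)) (c : V × V → ℝ)
    (f : V × V → Matrix (Fin 2) (Fin 2) ℝ) (u : V) : ℝ :=
  ∑ a ∈ A, ((if a.1 = u then |pp c f a| else 0) +
            (if a.2 = u then |qq c f a| else 0))

noncomputable def W (A : Finset (V × V)) (c : V × V → ℝ)
    (f : V × V → Matrix (Fin 2) (Fin 2) ℝ) : (V ⊕ Fin 2) → (V ⊕ Fin 2) → ℝ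
  | Sum.inl u, Sum.inl v => Lmb A c f u v + Lmb A c f v u
  | Sum.inl u, Sum.inr i => if i = 0 then Sf A c f u else Tf A c f u
  | Sum.inr i, Sum.inl v => if i = 0 then Sf A c f v else Tf A c f v
  | Sum.inr _, Sum.inr _ => 0

lemma lam_nonneg (A : Finset (V × V)) (c : V × V → ℝ)
    (f : V × V → Matrix (Fin 2) (Fin 2) ℝ)
    (hc : ∀ a ∈ A, 0 ≤ c a)
    (hprop : ∀ a ∈ A, f a 0 1 + f a 1 0 ≤ f a 0 0 + f a 1 1)
    {a : V × V} (ha : a ∈ A) : 0 ≤ lam c f a := by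
  have h1 := hc a ha
  have h2 := hprop a ha
  unfold lam
  nlinarith

/-- per-arc identity -/
lemma arc_decomp (c : V × V → ℝ) (f : V × V → Matrix (Fin 2) (Fin 2) ℝ)
    (X1 : Finset V) (a : V × V) :
    (if a.1 ∈ X1 then |pp c f a| else |pp c f a| + pp c f a) +
    (if a.2 ∈ X1 then |qq c f a| else |qq c f a| + qq c f a) +
    ((if a.1 ∈ X1 ∧ a.2 ∈ X1ᶜ then lam c f a else 0) +
     (if a.1 ∈ X1ᶜ ∧ a.2 ∈ X1 then lam c f a else 0))
    = |pp c f a| + |qq c f a| + c a * f a 0 0 - arcWeight c f X1 a := by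
  by_cases h1 : a.1 ∈ X1 <;> by_cases h2 : a.2 ∈ X1 <;>
    simp [arcWeight, pp, qq, lam, h1, h2] <;> ring

lemma compl_eq (X1 : Finset V) :
    (X1.image Sum.inl ∪ {(Sum.inr 0 : V ⊕ Fin 2)})ᶜ
      = X1ᶜ.image Sum.inl ∪ {(Sum.inr 1 : V ⊕ Fin 2)} := by
  ext x
  cases x with
  | inl v => simp
  | inr i => fin_cases i <;> simp

lemma cut_eq (A : Finset (V × V)) (c : V × V → ℝ)
    (f : V × V → Matrix (Fin 2) (Fin 2) ℝ) (X1 : Finset V) :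
    (∑ u ∈ X1.image Sum.inl ∪ {(Sum.inr 0 : V ⊕ Fin 2)},
        ∑ v ∈ X1ᶜ.image Sum.inl ∪ {(Sum.inr 1 : V ⊕ Fin 2)}, W A c f u v)
      = (∑ a ∈ A, (|pp c f a| + |qq c f a| + c a * f a 0 0))
        - partWeight A c f X1 := by
  have hd1 : Disjoint (X1.image (Sum.inl : V → V ⊕ Fin 2)) {(Sum.inr 0 : V ⊕ Fin 2)} := by
    simp
  have hd2 : Disjoint (X1ᶜ.image (Sum.inl : V → V ⊕ Fin 2)) {(Sum.inr 1 : V ⊕ Fin 2)} := by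
    simp
  rw [Finset.sum_union hd1]
  have hinj : Function.Injective (Sum.inl : V → V ⊕ Fin 2) := Sum.inl_injective
  have hinner : ∀ g : (V ⊕ Fin 2) → ℝ,
      (∑ v ∈ X1ᶜ.image Sum.inl ∪ {(Sum.inr 1 : V ⊕ Fin 2)}, g v)
        = (∑ v ∈ X1ᶜ, g (Sum.inl v)) + g (Sum.inr 1) := by
    intro g
    rw [Finset.sum_union hd2, Finset.sum_image (fun a _ b _ h => hinj h)]
    simp
  simp only [Finset.sum_image (fun a _ b _ h => hinj h), Finset.sum_singleton, hinner]
  have hW1 : ∀ u v : V, W A c f (Sum.inl u) (Sum.inl v) = Lmb A c f u v + Lmb A c f v u :=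
    fun _ _ => rfl
  have hW2 : ∀ u : V, W A c f (Sum.inl u) (Sum.inr 1) = Tf A c f u := by
    intro u; simp [W]
  have hW3 : ∀ v : V, W A c f (Sum.inr 0) (Sum.inl v) = Sf A c f v := by
    intro v; simp [W]
  have hW4 : W A c f (Sum.inr 0) (Sum.inr 1) = 0 := rfl
  simp only [hW1, hW2, hW3, hW4, add_zero]
  -- now goal: ∑ u ∈ X1, (∑ v ∈ X1ᶜ, (Lmb u v + Lmb v u) + Tf u) + ∑ v ∈ X1ᶜ, Sf v = ...
  have hT : (∑ u ∈ X1, Tf A c f u)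
      = ∑ a ∈ A, ((if a.1 ∈ X1 then |pp c f a| else 0) +
                  (if a.2 ∈ X1 then |qq c f a| else 0)) := by
    unfold Tf
    rw [Finset.sum_comm]
    refine Finset.sum_congr rfl fun a _ => ?_
    rw [Finset.sum_add_distrib, Finset.sum_ite_eq, Finset.sum_ite_eq]
  have hS : (∑ v ∈ X1ᶜ, Sf A c f v)
      = ∑ a ∈ A, ((if a.1 ∈ X1ᶜ then |pp c f a| + pp c f a else 0) +
                  (if a.2 ∈ X1ᶜ then |qq c f a| + qq c f a else 0)) := by
    unfold Sf
    rw [Finset.sum_comm]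
    refine Finset.sum_congr rfl fun a _ => ?_
    rw [Finset.sum_add_distrib, Finset.sum_ite_eq, Finset.sum_ite_eq]
  have hL1 : (∑ u ∈ X1, ∑ v ∈ X1ᶜ, Lmb A c f u v)
      = ∑ a ∈ A, (if a.1 ∈ X1 ∧ a.2 ∈ X1ᶜ then lam c f a else 0) := by
    rw [← Finset.sum_product']
    unfold Lmb
    rw [Finset.sum_ite_mem]
    rw [show (∑ a ∈ A, if a.1 ∈ X1 ∧ a.2 ∈ X1ᶜ then lam c f a else 0)
        = ∑ a ∈ A, if a ∈ X1 ×ˢ X1ᶜ then lam c f a else 0 by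
      refine Finset.sum_congr rfl fun a _ => ?_
      simp [Finset.mem_product]]
    rw [Finset.sum_ite_mem, Finset.inter_comm]
  have hL2 : (∑ u ∈ X1, ∑ v ∈ X1ᶜ, Lmb A c f v u)
      = ∑ a ∈ A, (if a.1 ∈ X1ᶜ ∧ a.2 ∈ X1 then lam c f a else 0) := by
    rw [Finset.sum_comm, ← Finset.sum_product']
    unfold Lmb
    rw [Finset.sum_ite_mem]
    rw [show (∑ a ∈ A, if a.1 ∈ X1ᶜ ∧ a.2 ∈ X1 then lam c f a else 0)
        = ∑ a ∈ A, if a ∈ X1ᶜ ×ˢ X1 then lam c f a else 0 by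
      refine Finset.sum_congr rfl fun a _ => ?_
      simp [Finset.mem_product]]
    rw [Finset.sum_ite_mem, Finset.inter_comm]
  have key : (∑ u ∈ X1, ∑ v ∈ X1ᶜ, (Lmb A c f u v + Lmb A c f v u))
        + (∑ u ∈ X1, Tf A c f u) + (∑ v ∈ X1ᶜ, Sf A c f v)
      = (∑ a ∈ A, (|pp c f a| + |qq c f a| + c a * f a 0 0)) - partWeight A c f X1 := by
    have hsplit : (∑ u ∈ X1, ∑ v ∈ X1ᶜ, (Lmb A c f u v + Lmb A c f v u))
        = (∑ u ∈ X1, ∑ v ∈ X1ᶜ, Lmb A c f u v) + (∑ u ∈ X1, ∑ v ∈ X1ᶜ, Lmb A c f v u) := by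
      rw [← Finset.sum_add_distrib]
      exact Finset.sum_congr rfl fun u _ => Finset.sum_add_distrib
    rw [hsplit, hL1, hL2, hT, hS, partWeight, ← Finset.sum_sub_distrib]
    rw [← Finset.sum_add_distrib, ← Finset.sum_add_distrib, ← Finset.sum_add_distrib]
    refine Finset.sum_congr rfl fun a ha => ?_
    have := arc_decomp c f X1 a
    by_cases h1 : a.1 ∈ X1 <;> by_cases h2 : a.2 ∈ X1 <;>
      simp only [Finset.mem_compl, h1, h2, if_true, if_false, not_true, not_false_iff,
        true_and, false_and, and_true, and_false, if_neg, if_pos] at this ⊢ <;> linarith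
  calc (∑ u ∈ X1, ((∑ v ∈ X1ᶜ, (Lmb A c f u v + Lmb A c f v u)) + Tf A c f u))
        + (∑ v ∈ X1ᶜ, Sf A c f v)
      = (∑ u ∈ X1, ∑ v ∈ X1ᶜ, (Lmb A c f u v + Lmb A c f v u))
        + (∑ u ∈ X1, Tf A c f u) + (∑ v ∈ X1ᶜ, Sf A c f v) := by
        rw [Finset.sum_add_distrib]
    _ = _ := key

end MWDPaux

/-- If every matrix assigned by `f` satisfies `M11 + M22 ≥ M12 + M21`, then, adding two new
vertices `s = Sum.inr 0` and `t = Sum.inr 1`, there are a symmetric nonnegative weight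
function `w*` on pairs of vertices of `V ∪ {s,t}` and a constant `C` such that for every
`X1 ⊆ V` the `w*`-weight of the cut `(X1 ∪ {s}, (V \ X1) ∪ {t})` equals `C - w^P(D)` where
`P = (X1, V \ X1)`; consequently the maximum partition weight equals `C` minus the minimum
weight of an `(s,t)`-cut. -/
theorem mwdp_reduces_to_min_cut {V : Type*} [Fintype V] [DecidableEq V]
    (A : Finset (V × V)) (c : V × V → ℝ) (f : V × V → Matrix (Fin 2) (Fin 2) ℝ)
    (hloop : ∀ a ∈ A, a.1 ≠ a.2)
    (hc : ∀ a ∈ A, 0 ≤ c a)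
    (hprop : ∀ a ∈ A, f a 0 1 + f a 1 0 ≤ f a 0 0 + f a 1 1) :
    ∃ (w : (V ⊕ Fin 2) → (V ⊕ Fin 2) → ℝ) (C : ℝ),
      (∀ u v, w u v = w v u) ∧
      (∀ u v, 0 ≤ w u v) ∧
      (∀ X1 : Finset V,
        (∑ u ∈ X1.image Sum.inl ∪ {(Sum.inr 0 : V ⊕ Fin 2)},
          ∑ v ∈ X1ᶜ.image Sum.inl ∪ {(Sum.inr 1 : V ⊕ Fin 2)}, w u v)
          = C - partWeight A c f X1) ∧
      sSup (Set.range fun X1 : Finset V => partWeight A c f X1)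
        = C - sInf {k : ℝ | ∃ Y1 : Finset (V ⊕ Fin 2),
            (Sum.inr 0 : V ⊕ Fin 2) ∈ Y1 ∧ (Sum.inr 1 : V ⊕ Fin 2) ∉ Y1 ∧
            k = ∑ u ∈ Y1, ∑ v ∈ Y1ᶜ, w u v} := by
  classical
  refine ⟨MWDPaux.W A c f, ∑ a ∈ A, (|MWDPaux.pp c f a| + |MWDPaux.qq c f a| + c a * f a 0 0),
    ?_, ?_, ?_, ?_⟩
  · intro u v
    cases u <;> cases v <;> simp [MWDPaux.W] <;> ring
  · intro u v
    have hL : ∀ x y : V, 0 ≤ MWDPaux.Lmb A c f x y := by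
      intro x y
      unfold MWDPaux.Lmb
      split
      · exact MWDPaux.lam_nonneg A c f hc hprop ‹_›
      · exact le_rfl
    have habs : ∀ r : ℝ, 0 ≤ |r| + r := fun r => by
      have := neg_abs_le r; linarith
    have hSf : ∀ x : V, 0 ≤ MWDPaux.Sf A c f x := by
      intro x
      refine Finset.sum_nonneg fun a _ => add_nonneg ?_ ?_ <;> split <;>
        first | exact habs _ | exact le_rfl
    have hTf : ∀ x : V, 0 ≤ MWDPaux.Tf A c f x := by
      intro x
      refine Finset.sum_nonneg fun a _ => add_nonneg ?_ ?_ <;> split <;>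
        first | exact abs_nonneg _ | exact le_rfl
    cases u <;> cases v <;> simp only [MWDPaux.W] <;>
      first
        | exact add_nonneg (hL _ _) (hL _ _)
        | (split
           · exact hSf _
           · exact hTf _)
        | exact le_rfl
  · exact MWDPaux.cut_eq A c f
  · set C := ∑ a ∈ A, (|MWDPaux.pp c f a| + |MWDPaux.qq c f a| + c a * f a 0 0) with hC
    set S : Set ℝ := Set.range fun X1 : Finset V => partWeight A c f X1 with hS
    have hfin : S.Finite := Set.finite_range _
    have hne : S.Nonempty := ⟨partWeight A c f ∅, ⟨∅, rfl⟩⟩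
    have hsetEq : {k : ℝ | ∃ Y1 : Finset (V ⊕ Fin 2),
          (Sum.inr 0 : V ⊕ Fin 2) ∈ Y1 ∧ (Sum.inr 1 : V ⊕ Fin 2) ∉ Y1 ∧
          k = ∑ u ∈ Y1, ∑ v ∈ Y1ᶜ, MWDPaux.W A c f u v}
        = (fun x => C - x) '' S := by
      ext k
      constructor
      · rintro ⟨Y1, h0, h1, rfl⟩
        refine ⟨partWeight A c f (Finset.univ.filter fun v => Sum.inl v ∈ Y1), ⟨_, rfl⟩, ?_⟩
        set X1 := Finset.univ.filter fun v => Sum.inl v ∈ Y1 with hX1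
        have hY : Y1 = X1.image Sum.inl ∪ {(Sum.inr 0 : V ⊕ Fin 2)} := by
          ext x
          cases x with
          | inl v => simp [hX1]
          | inr i => fin_cases i <;> simp [h0, h1]
        rw [hY, MWDPaux.compl_eq, MWDPaux.cut_eq]
      · rintro ⟨x, ⟨X1, rfl⟩, rfl⟩
        refine ⟨X1.image Sum.inl ∪ {(Sum.inr 0 : V ⊕ Fin 2)}, ?_, ?_, ?_⟩
        · simp
        · simp
        · rw [MWDPaux.compl_eq, MWDPaux.cut_eq]
    rw [hsetEq]
    have hmem : sSup S ∈ S := hne.csSup_mem hfin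
    have hleast : IsLeast ((fun x => C - x) '' S) (C - sSup S) := by
      constructor
      · exact ⟨sSup S, hmem, rfl⟩
      · rintro _ ⟨x, hx, rfl⟩
        have := le_csSup hfin.bddAbove hx
        show C - sSup S ≤ C - x
        linarith
    rw [hleast.csInf_eq]
    ring
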